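/- For every n ≥ 1, the operator ρ_n on ℂ^{Ω_n} whose matrix entries are D_n(ω, ω') = a_n(ω) · conj(a_n(ω')) is a q-probability operator: ρ_n is positive semidefinite (for every f : Ω_n → ℂ, the number ∑_{ω, ω' ∈ Ω_n} conj(f ω) · a_n(ω) · conj(a_n(ω')) · f ω' is a nonnegative real), and ⟨ρ_n 1_n, 1_n⟩ = ∑_{ω, ω' ∈ Ω_n} a_n(ω) · conj(a_n(ω')) = 1, where 1_n is the constant function 1. (This is the positivity and normalization part of Theorem 5.1: an amplitude process is a quantum sequential growth process.) -/

import Mathlib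

/-!
The operator `ρ_n` is the rank-one operator `|a_n⟩⟨a_n|`, so `⟨ρ_n f, f⟩ = |∑ conj (f ω) a_n(ω)|² ≥ 0`
and `⟨ρ_n 1_n, 1_n⟩ = |∑_{ω ∈ Ω_n} a_n(ω)|²`. The total amplitude `∑_{ω ∈ Ω_n} a_n(ω)` is `1`:
extending a path by a last vertex `y ∈ succ x` multiplies its amplitude by `a x y`, and these
factors sum to `1` over the successors of `x`.
-/

variable {V : Type*} [Fintype V] [DecidableEq V]

/-- An `n`-path: `ω 0 = v₀` and each entry is a successor of the previous one. -/
def IsPath (v₀ : V) (succ : V → Finset V) (n : ℕ) (ω : Fin n → V) : Prop :=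
  (∀ i : Fin n, (i : ℕ) = 0 → ω i = v₀) ∧
    ∀ i j : Fin n, (j : ℕ) = (i : ℕ) + 1 → ω j ∈ succ (ω i)

instance (v₀ : V) (succ : V → Finset V) (n : ℕ) :
    DecidablePred (IsPath v₀ succ n) := fun ω => by
  unfold IsPath; infer_instance

/-- `Ω_n`, the finite set of `n`-paths. -/
def pathSet (v₀ : V) (succ : V → Finset V) (n : ℕ) : Finset (Fin n → V) :=
  Finset.univ.filter (IsPath v₀ succ n)

/-- The amplitude `a_n(ω) = ∏_{k=0}^{n-2} a (ω k) (ω (k+1))`. -/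
noncomputable def amp (a : V → V → ℂ) (n : ℕ) (ω : Fin n → V) : ℂ :=
  ∏ k : Fin (n - 1),
    a (ω ⟨k.1, by have := k.2; omega⟩) (ω ⟨k.1 + 1, by have := k.2; omega⟩)

/-- The decoherence functional `D_n(A,B) = (∑_{ω ∈ A} a_n(ω)) ⬝ conj (∑_{ω' ∈ B} a_n(ω'))`. -/
noncomputable def Dfun (a : V → V → ℂ) (n : ℕ) (A B : Finset (Fin n → V)) : ℂ :=
  (∑ ω ∈ A, amp a n ω) * (starRingEnd ℂ) (∑ ω ∈ B, amp a n ω)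

/-- The `q`-measure `μ_n(A) = |∑_{ω ∈ A} a_n(ω)|²`. -/
noncomputable def qMeas (a : V → V → ℂ) (n : ℕ) (A : Finset (Fin n → V)) : ℝ :=
  Complex.normSq (∑ ω ∈ A, amp a n ω)

/-- The one-step extension `A→ = {ω ∈ Ω_{n+1} : ω|_{Fin n} ∈ A}`. -/
def ext (v₀ : V) (succ : V → Finset V) {n : ℕ} (A : Finset (Fin n → V)) :
    Finset (Fin (n + 1) → V) :=
  (pathSet v₀ succ (n + 1)).filter (fun ω => (fun k : Fin n => ω k.castSucc) ∈ A)

theorem sum_sum_star_mul_mul_nonneg {ι R : Type*} [CommRing R] [PartialOrder R] [StarRing R]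
    [StarOrderedRing R] (s : Finset ι) (f g : ι → R) :
    0 ≤ ∑ i ∈ s, ∑ j ∈ s, starRingEnd R (f i) * (g i * starRingEnd R (g j)) * f j := by
  have h : ∑ i ∈ s, ∑ j ∈ s, starRingEnd R (f i) * (g i * starRingEnd R (g j)) * f j
      = (∑ i ∈ s, star (f i) * g i) * star (∑ j ∈ s, star (f j) * g j) := by
    simp only [star_sum, star_mul, star_star, Finset.sum_mul_sum, starRingEnd_apply]
    exact Finset.sum_congr rfl fun i _ => Finset.sum_congr rfl fun j _ => by ring
  exact h ▸ mul_star_self_nonneg _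

section Paths

variable (v₀ : V) (succ : V → Finset V)

omit [Fintype V] [DecidableEq V] in
theorem isPath_succ_iff {n : ℕ} (ω : Fin (n + 1) → V) :
    IsPath v₀ succ (n + 1) ω ↔ ω 0 = v₀ ∧ ∀ k : Fin n, ω k.succ ∈ succ (ω k.castSucc) := by
  refine and_congr ⟨fun h => h 0 rfl, ?_⟩ ⟨fun h k => h _ _ rfl, ?_⟩
  · rintro h i hi
    rwa [show i = 0 from Fin.ext (by simpa using hi)]
  · rintro h i j hj
    have hk := h ⟨i, by omega⟩
    rwa [show (⟨i, _⟩ : Fin n).succ = j from Fin.ext hj.symm] at hk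

omit [Fintype V] [DecidableEq V] in
theorem isPath_snoc_iff {n : ℕ} (ω : Fin (n + 1) → V) (y : V) :
    IsPath v₀ succ (n + 2) (Fin.snoc ω y) ↔
      IsPath v₀ succ (n + 1) ω ∧ y ∈ succ (ω (Fin.last n)) := by
  simp [isPath_succ_iff, Fin.forall_fin_succ' (n := n), Fin.succ_castSucc, -Fin.castSucc_succ,
    and_assoc]

theorem pathSet_zero : pathSet v₀ succ 0 = Finset.univ :=
  Finset.filter_true_of_mem fun _ _ => ⟨fun i => i.elim0, fun i => i.elim0⟩

theorem pathSet_one : pathSet v₀ succ 1 = {fun _ => v₀} := by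
  ext ω
  simp [pathSet, isPath_succ_iff, funext_iff, Fin.forall_fin_one]

theorem sum_pathSet_succ_succ {M : Type*} [AddCommMonoid M] (n : ℕ)
    (F : (Fin (n + 2) → V) → M) :
    ∑ ω ∈ pathSet v₀ succ (n + 2), F ω =
      ∑ ω ∈ pathSet v₀ succ (n + 1), ∑ y ∈ succ (ω (Fin.last n)), F (Fin.snoc ω y) := by
  rw [Finset.sum_sigma']
  refine Finset.sum_bij' (fun ω _ => ⟨Fin.init ω, ω (Fin.last (n + 1))⟩)
    (fun p _ => Fin.snoc p.1 p.2) ?_ ?_ (fun ω _ => Fin.snoc_init_self ω) (fun p _ => by simp)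
    (fun ω _ => by rw [Fin.snoc_init_self])
  · intro ω hω
    simp only [pathSet, Finset.mem_filter, Finset.mem_univ, true_and, Finset.mem_sigma] at hω ⊢
    rwa [← Fin.snoc_init_self ω, isPath_snoc_iff] at hω
  · intro p hp
    simp only [pathSet, Finset.mem_filter, Finset.mem_univ, true_and, Finset.mem_sigma] at hp ⊢
    exact (isPath_snoc_iff v₀ succ p.1 p.2).mpr hp

end Paths

omit [Fintype V] [DecidableEq V] in
theorem amp_succ (a : V → V → ℂ) {n : ℕ} (ω : Fin (n + 1) → V) :
    amp a (n + 1) ω = ∏ k : Fin n, a (ω k.castSucc) (ω k.succ) := rfl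

omit [Fintype V] [DecidableEq V] in
theorem amp_snoc (a : V → V → ℂ) {n : ℕ} (ω : Fin (n + 1) → V) (y : V) :
    amp a (n + 2) (Fin.snoc ω y) = amp a (n + 1) ω * a (ω (Fin.last n)) y := by
  rw [amp_succ, amp_succ, Fin.prod_univ_castSucc]
  simp [Fin.succ_castSucc, -Fin.castSucc_succ]

theorem sum_amp_pathSet (v₀ : V) (succ : V → Finset V) (a : V → V → ℂ)
    (ha : ∀ x : V, ∑ y ∈ succ x, a x y = 1) : ∀ n, ∑ ω ∈ pathSet v₀ succ n, amp a n ω = 1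
  | 0 => by simp [pathSet_zero, amp]
  | 1 => by simp [pathSet_one, amp]
  | n + 2 => by
    simp only [sum_pathSet_succ_succ, amp_snoc, ← Finset.mul_sum, ha, mul_one]
    exact sum_amp_pathSet v₀ succ a ha (n + 1)

open scoped ComplexOrder

theorem stmt3_general (v₀ : V) (succ : V → Finset V) (a : V → V → ℂ)
    (ha : ∀ x : V, ∑ y ∈ succ x, a x y = 1) (n : ℕ) :
    (∀ f : (Fin n → V) → ℂ,
      0 ≤ ∑ ω ∈ pathSet v₀ succ n, ∑ ω' ∈ pathSet v₀ succ n,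
        (starRingEnd ℂ) (f ω) * (amp a n ω * (starRingEnd ℂ) (amp a n ω')) * f ω') ∧
      ∑ ω ∈ pathSet v₀ succ n, ∑ ω' ∈ pathSet v₀ succ n,
        amp a n ω * (starRingEnd ℂ) (amp a n ω') = 1 := by
  refine ⟨fun f => sum_sum_star_mul_mul_nonneg _ f (amp a n), ?_⟩
  rw [← Finset.sum_mul_sum, ← map_sum, sum_amp_pathSet v₀ succ a ha n, map_one, one_mul]

/-- **Theorem 5.1** (positivity and normalization part): the operator `ρ_n` with
matrix entries `D_n(ω, ω') = a_n(ω) ⬝ conj (a_n(ω'))` is positive semidefinite and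
satisfies `⟨ρ_n 1_n, 1_n⟩ = 1`. -/
theorem stmt3 (v₀ : V) (succ : V → Finset V) (a : V → V → ℂ)
    (ha : ∀ x : V, ∑ y ∈ succ x, a x y = 1) (n : ℕ) (hn : 1 ≤ n) :
    (∀ f : (Fin n → V) → ℂ,
      0 ≤ ∑ ω ∈ pathSet v₀ succ n, ∑ ω' ∈ pathSet v₀ succ n,
        (starRingEnd ℂ) (f ω) * (amp a n ω * (starRingEnd ℂ) (amp a n ω')) * f ω') ∧
      ∑ ω ∈ pathSet v₀ succ n, ∑ ω' ∈ pathSet v₀ succ n,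
        amp a n ω * (starRingEnd ℂ) (amp a n ω') = 1 :=
  stmt3_general v₀ succ a ha n
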